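/- Let H : ℝ^d × ℝ^d → ℝ be a C² Hamiltonian with flow φ_t, and let 𝒦 ⊆ ℝ^d × ℝ^d be compact and convex in the fiber (i.e., (q,p), (q,p') ∈ 𝒦 implies (q, sp + (1-s)p') ∈ 𝒦 for s ∈ [0,1]). Suppose there are constants 0 < c ≤ C such that c‖v‖² ≤ H_{pp}(φ_τ(x))(v,v) ≤ C‖v‖² for all τ ∈ [-1,1], x ∈ 𝒦, v ∈ ℝ^d. Then there exists ε > 0 such that for all t ∈ (0, ε] and all (q,p), (q, p+Δp) ∈ 𝒦, writing (q₀,p₀) = φ_t(q,p) and (q₁,p₁) = φ_t(q,p+Δp), one has ⟪p₁ - p₀, q₁ - q₀⟫ ≥ (c/2)·t·‖Δp‖² and ‖q₁ - q₀‖ ≤ 2C·t·‖Δp‖. -/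

import Mathlib

/-!
Put `x = (q, p)`, `x' = (q, p + Δp)` and `w(t) = φ_t x' - φ_t x`, so `w(0) = (0, Δp)`. On a
compact ball around `𝒦` the vector field `X_H` is bounded and Lipschitz with uniformly continuous
derivative, so for short times Grönwall gives `w(t) = w(0) + O(t ‖Δp‖)`, and comparing `X_H` along
the two trajectories with its values at time `0` gives
`w(t) = w(0) + t (X_H x' - X_H x) + o(t) ‖Δp‖`, uniformly on `𝒦`. The `q`-component of
`X_H x' - X_H x` is `D = ∇_p H (q, p + Δp) - ∇_p H (q, p)`; integrating `H_pp` along the fibre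
segment, which stays in `𝒦`, gives `⟪D, Δp⟫ ≥ c ‖Δp‖²` and, the Hessian being symmetric,
`‖D‖ ≤ C ‖Δp‖`. Hence `q₁ - q₀ ≈ t D` and `p₁ - p₀ ≈ Δp`, and both estimates follow.
-/

open scoped RealInnerProductSpace

/-- The Hamiltonian vector field `(∂H/∂p, -∂H/∂q)` of `H` on `ℝ^d × ℝ^d`. -/
noncomputable def HamVF {d : ℕ}
    (H : EuclideanSpace ℝ (Fin d) × EuclideanSpace ℝ (Fin d) → ℝ)
    (z : EuclideanSpace ℝ (Fin d) × EuclideanSpace ℝ (Fin d)) :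
    EuclideanSpace ℝ (Fin d) × EuclideanSpace ℝ (Fin d) :=
  (gradient (fun p => H (z.1, p)) z.2, -gradient (fun q => H (q, z.2)) z.1)

/-- The Hessian of `H` in the `p` variables at `z`, applied to `(v, v)`. -/
noncomputable def Hpp {d : ℕ}
    (H : EuclideanSpace ℝ (Fin d) × EuclideanSpace ℝ (Fin d) → ℝ)
    (z : EuclideanSpace ℝ (Fin d) × EuclideanSpace ℝ (Fin d))
    (v : EuclideanSpace ℝ (Fin d)) : ℝ :=
  ⟪(fderiv ℝ (fun p => gradient (fun p' => H (z.1, p')) p) z.2) v, v⟫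

open Set Metric Filter Topology InnerProductSpace
open scoped NNReal

theorem ContinuousLinearMap.norm_le_of_abs_inner_le {F : Type*} [NormedAddCommGroup F]
    [InnerProductSpace ℝ F] {T : F →L[ℝ] F}
    (hT : (T : F →ₗ[ℝ] F).IsSymmetric) {C : ℝ} (hC : 0 ≤ C)
    (h : ∀ u, |⟪T u, u⟫| ≤ C * ‖u‖ ^ 2) : ‖T‖ ≤ C := by
  rw [T.norm_eq_iSup_rayleighQuotient hT]
  refine ciSup_le fun u => ?_
  rcases eq_or_ne u 0 with rfl | hu
  · simpa using hC
  rw [ContinuousLinearMap.rayleighQuotient, abs_div, abs_sq,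
    div_le_iff₀ (pow_pos (norm_pos_iff.2 hu) 2)]
  simpa [ContinuousLinearMap.reApplyInnerSelf_apply] using h u

section Gradient

variable {F : Type*} [NormedAddCommGroup F] [InnerProductSpace ℝ F] [CompleteSpace F]

theorem hasFDerivAt_gradient_of_differentiableAt {h : F → ℝ} {p : F}
    (hh : DifferentiableAt ℝ (fderiv ℝ h) p) :
    HasFDerivAt (gradient h)
      ((toDual ℝ F).symm.toContinuousLinearEquiv.toContinuousLinearMap.comp
        (fderiv ℝ (fderiv ℝ h) p)) p :=
  (toDual ℝ F).symm.toContinuousLinearEquiv.toContinuousLinearMap.hasFDerivAt.comp p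
    hh.hasFDerivAt

theorem inner_fderiv_gradient_apply {h : F → ℝ} {p : F}
    (hh : DifferentiableAt ℝ (fderiv ℝ h) p) (v w : F) :
    ⟪fderiv ℝ (gradient h) p v, w⟫ = fderiv ℝ (fderiv ℝ h) p v w := by
  rw [(hasFDerivAt_gradient_of_differentiableAt hh).fderiv]
  exact toDual_symm_apply

theorem isSymmetric_fderiv_gradient {h : F → ℝ} (hh : ContDiff ℝ 2 h) (p : F) :
    (fderiv ℝ (gradient h) p : F →ₗ[ℝ] F).IsSymmetric := by
  have hd : DifferentiableAt ℝ (fderiv ℝ h) p :=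
    (hh.fderiv_right (m := 1) (by norm_num)).differentiable one_ne_zero p
  intro v w
  rw [ContinuousLinearMap.coe_coe, real_inner_comm _ v,
    inner_fderiv_gradient_apply hd, inner_fderiv_gradient_apply hd]
  exact (hh.contDiffAt.isSymmSndFDerivAt (by simp)) v w

theorem hasDerivAt_gradient_add_smul {h : F → ℝ} (hh : Differentiable ℝ (fderiv ℝ h))
    (p v : F) (r : ℝ) :
    HasDerivAt (fun r : ℝ => gradient h (p + r • v)) (fderiv ℝ (gradient h) (p + r • v) v) r := by
  have hline : HasDerivAt (fun r : ℝ => p + r • v) v r := by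
    simpa using ((hasDerivAt_id r).smul_const v).const_add p
  exact (hasFDerivAt_gradient_of_differentiableAt (hh _)).differentiableAt.hasFDerivAt
    |>.comp_hasDerivAt r hline

theorem mul_norm_sq_le_inner_gradient_sub {h : F → ℝ} (hh : Differentiable ℝ (fderiv ℝ h))
    {p v : F} {c : ℝ}
    (hc : ∀ r ∈ Icc (0 : ℝ) 1, c * ‖v‖ ^ 2 ≤ ⟪fderiv ℝ (gradient h) (p + r • v) v, v⟫) :
    c * ‖v‖ ^ 2 ≤ ⟪gradient h (p + v) - gradient h p, v⟫ := by
  have hderiv : ∀ r, HasDerivAt (fun r : ℝ => ⟪gradient h (p + r • v), v⟫)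
      ⟪fderiv ℝ (gradient h) (p + r • v) v, v⟫ r := fun r => by
    simpa using (hasDerivAt_gradient_add_smul hh p v r).inner ℝ (hasDerivAt_const r v)
  have h := (convex_Icc (0 : ℝ) 1).mul_sub_le_image_sub_of_le_deriv
    (fun r _ => (hderiv r).continuousAt.continuousWithinAt)
    (fun r _ => (hderiv r).differentiableAt.differentiableWithinAt)
    (fun r hr => (hderiv r).deriv ▸ hc r (interior_subset hr)) 0 (left_mem_Icc.2 zero_le_one) 1
    (right_mem_Icc.2 zero_le_one) zero_le_one
  simpa [inner_sub_left] using h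

theorem norm_gradient_sub_le {h : F → ℝ} (hh : ContDiff ℝ 2 h) {p v : F} {C : ℝ} (hC : 0 ≤ C)
    (hbound : ∀ r ∈ Icc (0 : ℝ) 1, ∀ u,
      |⟪fderiv ℝ (gradient h) (p + r • v) u, u⟫| ≤ C * ‖u‖ ^ 2) :
    ‖gradient h (p + v) - gradient h p‖ ≤ C * ‖v‖ := by
  have hd : Differentiable ℝ (fderiv ℝ h) :=
    (hh.fderiv_right (m := 1) (by norm_num)).differentiable one_ne_zero
  simpa using norm_image_sub_le_of_norm_deriv_le_segment_01'
    (fun r _ => (hasDerivAt_gradient_add_smul hd p v r).hasDerivWithinAt)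
    (fun r hr => ((fderiv ℝ (gradient h) _).le_opNorm v).trans (mul_le_mul_of_nonneg_right
      ((ContinuousLinearMap.norm_le_of_abs_inner_le (isSymmetric_fderiv_gradient hh _) hC
        (hbound r (Ico_subset_Icc_self hr)))) (norm_nonneg v)))

end Gradient

section PartialGradient

variable {E F : Type*} [NormedAddCommGroup E] [NormedAddCommGroup F] {H : E × F → ℝ}

theorem gradient_prodMk_left_eq [InnerProductSpace ℝ E] [CompleteSpace E] [NormedSpace ℝ F]
    {z : E × F} (hH : DifferentiableAt ℝ H z) :
    gradient (fun q => H (q, z.2)) z.1 =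
      (toDual ℝ E).symm ((fderiv ℝ H z).comp (ContinuousLinearMap.inl ℝ E F)) := by
  have h : HasFDerivAt (fun q => H (q, z.2)) ((fderiv ℝ H z).comp (.inl ℝ E F)) z.1 :=
    hH.hasFDerivAt.comp z.1 (hasFDerivAt_prodMk_left z.1 z.2)
  rw [gradient, h.fderiv]

theorem gradient_prodMk_right_eq [NormedSpace ℝ E] [InnerProductSpace ℝ F] [CompleteSpace F]
    {z : E × F} (hH : DifferentiableAt ℝ H z) :
    gradient (fun p => H (z.1, p)) z.2 =
      (toDual ℝ F).symm ((fderiv ℝ H z).comp (ContinuousLinearMap.inr ℝ E F)) := by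
  have h : HasFDerivAt (fun p => H (z.1, p)) ((fderiv ℝ H z).comp (.inr ℝ E F)) z.2 :=
    hH.hasFDerivAt.comp z.2 (hasFDerivAt_prodMk_right z.1 z.2)
  rw [gradient, h.fderiv]

end PartialGradient

theorem contDiff_hamVF {d : ℕ} {H : EuclideanSpace ℝ (Fin d) × EuclideanSpace ℝ (Fin d) → ℝ}
    (hH : ContDiff ℝ 2 H) : ContDiff ℝ 1 (HamVF H) := by
  have hd : Differentiable ℝ H := hH.differentiable two_ne_zero
  have hH' : ContDiff ℝ 1 (fderiv ℝ H) := hH.fderiv_right (by norm_num)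
  have hpartial : ∀ J, ContDiff ℝ 1 fun z => (toDual ℝ (EuclideanSpace ℝ (Fin d))).symm
      ((fderiv ℝ H z).comp J) := fun J =>
    (toDual ℝ _).symm.contDiff.comp (hH'.clm_comp contDiff_const)
  have hVF : HamVF H = fun z => ((toDual ℝ _).symm ((fderiv ℝ H z).comp (.inr ℝ _ _)),
      -(toDual ℝ _).symm ((fderiv ℝ H z).comp (.inl ℝ _ _))) := by
    ext1 z
    rw [HamVF, gradient_prodMk_right_eq (hd z), gradient_prodMk_left_eq (hd z)]
  rw [hVF]
  exact (hpartial _).prodMk (hpartial _).neg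

section Trajectories

variable {X Y : Type*} [NormedAddCommGroup X] [NormedSpace ℝ X] [NormedAddCommGroup Y]
  [NormedSpace ℝ Y]

theorem dist_le_mul_of_hasDerivAt_of_norm_lt {γ : ℝ → X} {V : X → X} {r M T : ℝ}
    (hγ : ∀ s, HasDerivAt γ (V (γ s)) s) (hr : 0 ≤ r)
    (hV : ∀ z ∈ closedBall (γ 0) r, ‖V z‖ < M) (hT : M * T ≤ r) :
    ∀ s ∈ Icc 0 T, dist (γ s) (γ 0) ≤ M * s := by
  have hM : 0 ≤ M := (norm_nonneg _).trans (hV _ (mem_closedBall_self hr)).le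
  intro s hs
  rw [dist_eq_norm]
  refine image_norm_le_of_norm_deriv_right_lt_deriv_boundary (f := fun s => γ s - γ 0)
    (fun u _ => ((hγ u).sub_const _).continuousAt.continuousWithinAt)
    (fun u _ => ((hγ u).sub_const _).hasDerivWithinAt) (by simp)
    (fun u => by simpa using (hasDerivAt_id u).const_mul M) (fun u hu hγu => hV _ ?_) hs
  rw [mem_closedBall, dist_eq_norm, hγu]
  exact (mul_le_mul_of_nonneg_left hu.2.le hM).trans hT

theorem norm_sub_sub_le_of_lipschitzOnWith {γ₁ γ₂ : ℝ → X} {V : X → X} {B : Set X} {K : ℝ≥0}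
    {T : ℝ} (hγ₁ : ∀ s, HasDerivAt γ₁ (V (γ₁ s)) s) (hγ₂ : ∀ s, HasDerivAt γ₂ (V (γ₂ s)) s)
    (hV : LipschitzOnWith K V B) (hγ₁B : ∀ s ∈ Icc 0 T, γ₁ s ∈ B)
    (hγ₂B : ∀ s ∈ Icc 0 T, γ₂ s ∈ B) (hT : Real.exp (K * T) ≤ 2) :
    ∀ t ∈ Icc 0 T, ‖(γ₂ t - γ₁ t) - (γ₂ 0 - γ₁ 0)‖ ≤ 2 * K * ‖γ₂ 0 - γ₁ 0‖ * t := by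
  have hgronwall : ∀ s ∈ Icc 0 T, ‖γ₂ s - γ₁ s‖ ≤ 2 * ‖γ₂ 0 - γ₁ 0‖ := by
    intro s hs
    have h := dist_le_of_trajectories_ODE_of_mem (v := fun _ => V) (s := fun _ => B)
      (fun _ _ => hV) (fun u _ => (hγ₂ u).continuousAt.continuousWithinAt)
      (fun u _ => (hγ₂ u).hasDerivWithinAt) (fun u hu => hγ₂B u (Ico_subset_Icc_self hu))
      (fun u _ => (hγ₁ u).continuousAt.continuousWithinAt)
      (fun u _ => (hγ₁ u).hasDerivWithinAt) (fun u hu => hγ₁B u (Ico_subset_Icc_self hu))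
      le_rfl s hs
    rw [dist_eq_norm, dist_eq_norm, sub_zero] at h
    have hexp : Real.exp (K * s) ≤ 2 :=
      (Real.exp_le_exp.2 (mul_le_mul_of_nonneg_left hs.2 K.2)).trans hT
    calc ‖γ₂ s - γ₁ s‖ ≤ ‖γ₂ 0 - γ₁ 0‖ * Real.exp (K * s) := h
      _ ≤ 2 * ‖γ₂ 0 - γ₁ 0‖ := by nlinarith [norm_nonneg (γ₂ 0 - γ₁ 0)]
  intro t ht
  have hbound : ∀ u ∈ Ico 0 t, ‖V (γ₂ u) - V (γ₁ u)‖ ≤ 2 * K * ‖γ₂ 0 - γ₁ 0‖ := by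
    intro u hu
    have hu' : u ∈ Icc 0 T := ⟨hu.1, hu.2.le.trans ht.2⟩
    calc ‖V (γ₂ u) - V (γ₁ u)‖ ≤ K * ‖γ₂ u - γ₁ u‖ := hV.norm_sub_le (hγ₂B u hu') (hγ₁B u hu')
      _ ≤ K * (2 * ‖γ₂ 0 - γ₁ 0‖) := mul_le_mul_of_nonneg_left (hgronwall u hu') K.2
      _ = 2 * K * ‖γ₂ 0 - γ₁ 0‖ := by ring
  simpa using norm_image_sub_le_of_norm_deriv_le_segment' (f := fun s => γ₂ s - γ₁ s)
    (fun u _ => ((hγ₂ u).sub (hγ₁ u)).hasDerivWithinAt) hbound t (right_mem_Icc.2 ht.1)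

theorem norm_sub_sub_sub_le_of_uniform_fderiv {f : X → Y} {f' : X → X →L[ℝ] Y} {B : Set X}
    (hB : Convex ℝ B) (hf : ∀ z ∈ B, HasFDerivAt f (f' z) z) {K η δ : ℝ}
    (hK : ∀ z ∈ B, ‖f' z‖ ≤ K)
    (hf' : ∀ y ∈ B, ∀ z ∈ B, dist y z < δ → dist (f' y) (f' z) < η)
    {a b a₀ b₀ : X} (ha : a ∈ B) (hb : b ∈ B) (ha₀ : a₀ ∈ B) (hb₀ : b₀ ∈ B)
    (hclose : ‖a - a₀‖ + ‖(b - a) - (b₀ - a₀)‖ < δ) :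
    ‖(f b - f a) - (f b₀ - f a₀)‖ ≤ η * ‖b₀ - a₀‖ + K * ‖(b - a) - (b₀ - a₀)‖ := by
  obtain ⟨u, rfl⟩ : ∃ u, b = a + u := ⟨b - a, by abel⟩
  obtain ⟨u₀, rfl⟩ : ∃ u₀, b₀ = a₀ + u₀ := ⟨b₀ - a₀, by abel⟩
  simp only [add_sub_cancel_left] at hclose ⊢
  have hmem : ∀ r ∈ Icc (0 : ℝ) 1, a + r • u ∈ B ∧ a₀ + r • u₀ ∈ B := fun r hr =>
    ⟨by simpa using hB.add_smul_sub_mem ha hb hr, by simpa using hB.add_smul_sub_mem ha₀ hb₀ hr⟩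
  have hderiv : ∀ r ∈ Icc (0 : ℝ) 1, HasDerivWithinAt
      (fun r : ℝ => f (a + r • u) - f (a₀ + r • u₀))
      (f' (a + r • u) u - f' (a₀ + r • u₀) u₀) (Icc 0 1) r := by
    intro r hr
    have hline : ∀ (c v : X), HasDerivAt (fun r : ℝ => c + r • v) v r := fun c v => by
      simpa using ((hasDerivAt_id r).smul_const v).const_add c
    exact (((hf _ (hmem r hr).1).comp_hasDerivAt r (hline a u)).sub
      ((hf _ (hmem r hr).2).comp_hasDerivAt r (hline a₀ u₀))).hasDerivWithinAt
  have hbound : ∀ r ∈ Ico (0 : ℝ) 1, ‖f' (a + r • u) u - f' (a₀ + r • u₀) u₀‖ ≤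
      η * ‖u₀‖ + K * ‖u - u₀‖ := by
    intro r hr
    obtain ⟨hz, hz₀⟩ := hmem r (Ico_subset_Icc_self hr)
    have hdist : dist (a + r • u) (a₀ + r • u₀) < δ := by
      rw [dist_eq_norm, show a + r • u - (a₀ + r • u₀) = (a - a₀) + r • (u - u₀) by
        rw [smul_sub]; abel]
      refine (norm_add_le _ _).trans_lt (lt_of_le_of_lt ?_ hclose)
      rw [norm_smul, Real.norm_of_nonneg hr.1]
      gcongr
      exact mul_le_of_le_one_left (norm_nonneg _) hr.2.le
    rw [show f' (a + r • u) u - f' (a₀ + r • u₀) u₀ =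
      (f' (a + r • u) - f' (a₀ + r • u₀)) u₀ + f' (a + r • u) (u - u₀) by
        rw [sub_apply, map_sub]; abel]
    refine (norm_add_le _ _).trans (add_le_add ?_ ?_)
    · exact ((f' _ - f' _).le_opNorm u₀).trans (mul_le_mul_of_nonneg_right
        (by simpa [dist_eq_norm] using (hf' _ hz _ hz₀ hdist).le) (norm_nonneg _))
    · exact ((f' _).le_opNorm _).trans (mul_le_mul_of_nonneg_right (hK _ hz) (norm_nonneg _))
  have h := norm_image_sub_le_of_norm_deriv_le_segment_01' hderiv hbound
  simp only [one_smul, zero_smul, add_zero] at h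
  rwa [show f (a + u) - f a - (f (a₀ + u₀) - f a₀) = f (a + u) - f (a₀ + u₀) - (f a - f a₀) by
    abel]

theorem norm_sub_sub_sub_smul_le_of_uniform_fderiv {γ₁ γ₂ : ℝ → X} {V : X → X}
    {V' : X → X →L[ℝ] X} {B : Set X} (hB : Convex ℝ B) (hV : ∀ z ∈ B, HasFDerivAt V (V' z) z)
    {K L M η δ T : ℝ} (hK : ∀ z ∈ B, ‖V' z‖ ≤ K)
    (hV' : ∀ y ∈ B, ∀ z ∈ B, dist y z < δ → dist (V' y) (V' z) < η / 2)
    (hγ₁ : ∀ s, HasDerivAt γ₁ (V (γ₁ s)) s) (hγ₂ : ∀ s, HasDerivAt γ₂ (V (γ₂ s)) s)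
    (hγ₁B : ∀ s ∈ Icc 0 T, γ₁ s ∈ B) (hγ₂B : ∀ s ∈ Icc 0 T, γ₂ s ∈ B)
    (hM : 0 ≤ M) (hγ₁M : ∀ s ∈ Icc 0 T, dist (γ₁ s) (γ₁ 0) ≤ M * s)
    (hγ₂M : ∀ s ∈ Icc 0 T, dist (γ₂ s) (γ₂ 0) ≤ M * s)
    (hL : 0 ≤ L) (hγL : ∀ s ∈ Icc 0 T, ‖(γ₂ s - γ₁ s) - (γ₂ 0 - γ₁ 0)‖ ≤ L * ‖γ₂ 0 - γ₁ 0‖ * s)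
    (hMT : 3 * M * T < δ) (hKLT : K * L * T ≤ η / 2) :
    ∀ t ∈ Icc 0 T, ‖(γ₂ t - γ₁ t) - (γ₂ 0 - γ₁ 0) - t • (V (γ₂ 0) - V (γ₁ 0))‖ ≤
      η * ‖γ₂ 0 - γ₁ 0‖ * t := by
  intro t ht
  have hT : (0 : ℝ) ∈ Icc 0 T := left_mem_Icc.2 (ht.1.trans ht.2)
  have hK0 : 0 ≤ K := (norm_nonneg _).trans (hK _ (hγ₁B 0 hT))
  have hderiv : ∀ s ∈ Ico 0 t,
      ‖(V (γ₂ s) - V (γ₁ s)) - (V (γ₂ 0) - V (γ₁ 0))‖ ≤ η * ‖γ₂ 0 - γ₁ 0‖ := by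
    intro s hs
    have hs' : s ∈ Icc 0 T := ⟨hs.1, hs.2.le.trans ht.2⟩
    have hclose : ‖γ₁ s - γ₁ 0‖ + ‖(γ₂ s - γ₁ s) - (γ₂ 0 - γ₁ 0)‖ < δ := by
      have h₁ := hγ₁M s hs'
      have h₂ := hγ₂M s hs'
      rw [dist_eq_norm] at h₁ h₂
      calc _ ≤ ‖γ₁ s - γ₁ 0‖ + (‖γ₂ s - γ₂ 0‖ + ‖γ₁ s - γ₁ 0‖) := by
            rw [show γ₂ s - γ₁ s - (γ₂ 0 - γ₁ 0) = (γ₂ s - γ₂ 0) - (γ₁ s - γ₁ 0) by abel]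
            gcongr
            exact norm_sub_le _ _
        _ ≤ 3 * M * T := by nlinarith [mul_le_mul_of_nonneg_left hs'.2 hM]
        _ < δ := hMT
    have hKLs : K * L * s ≤ η / 2 :=
      (mul_le_mul_of_nonneg_left hs'.2 (mul_nonneg hK0 hL)).trans hKLT
    calc _ ≤ η / 2 * ‖γ₂ 0 - γ₁ 0‖ + K * ‖(γ₂ s - γ₁ s) - (γ₂ 0 - γ₁ 0)‖ :=
          norm_sub_sub_sub_le_of_uniform_fderiv hB hV hK hV' (hγ₁B s hs') (hγ₂B s hs')
            (hγ₁B 0 hT) (hγ₂B 0 hT) hclose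
      _ ≤ η / 2 * ‖γ₂ 0 - γ₁ 0‖ + K * (L * ‖γ₂ 0 - γ₁ 0‖ * s) := by gcongr; exact hγL s hs'
      _ ≤ η * ‖γ₂ 0 - γ₁ 0‖ := by
          nlinarith [mul_le_mul_of_nonneg_right hKLs (norm_nonneg (γ₂ 0 - γ₁ 0))]
  have h := norm_image_sub_le_of_norm_deriv_le_segment'
    (f := fun s => (γ₂ s - γ₁ s) - s • (V (γ₂ 0) - V (γ₁ 0)))
    (fun s _ => (((hγ₂ s).sub (hγ₁ s)).sub (by
      simpa using (hasDerivAt_id s).smul_const (V (γ₂ 0) - V (γ₁ 0)))).hasDerivWithinAt)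
    hderiv t (right_mem_Icc.2 ht.1)
  simpa [sub_right_comm _ (t • _)] using h

theorem exists_flow_mem_closedBall_and_dist_le [ProperSpace X] {V : X → X} (hV : Continuous V)
    {φ : ℝ → X → X} (hφ0 : ∀ x, φ 0 x = x)
    (hflow : ∀ x t, HasDerivAt (fun s => φ s x) (V (φ t x)) t) {𝒦 : Set X}
    (h𝒦 : IsCompact 𝒦) :
    ∃ R M : ℝ, 0 ≤ M ∧ ∀ᶠ ε in 𝓝 (0 : ℝ), ∀ y ∈ 𝒦, ∀ s ∈ Icc 0 ε,
      φ s y ∈ closedBall 0 R ∧ dist (φ s y) y ≤ M * s := by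
  obtain ⟨R, hR⟩ := h𝒦.isBounded.subset_closedBall 0
  have hball : ∀ y ∈ 𝒦, closedBall y 1 ⊆ closedBall 0 (R + 1) := fun y hy =>
    closedBall_subset_closedBall' (by linarith [mem_closedBall.1 (hR hy)])
  obtain ⟨M, hM⟩ := (isCompact_closedBall (0 : X) (R + 1)).exists_bound_of_continuousOn
    hV.continuousOn
  refine ⟨R + 1, max M 0 + 1, by positivity, ?_⟩
  filter_upwards [((continuous_const_mul (max M 0 + 1)).tendsto 0).eventually_lt_const
    (by simp : (max M 0 + 1) * 0 < 1)] with ε hε y hy s hs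
  have hdist := dist_le_mul_of_hasDerivAt_of_norm_lt (hflow y) zero_le_one (fun z hz =>
    ((hM z (hball y hy (by simpa only [hφ0] using hz))).trans (le_max_left M 0)).trans_lt
      (lt_add_one _)) hε.le s hs
  rw [hφ0] at hdist
  refine ⟨hball y hy (mem_closedBall.2 (hdist.trans ?_)), hdist⟩
  exact (mul_le_mul_of_nonneg_left hs.2 (by positivity)).trans hε.le

theorem exists_flow_sub_estimates [ProperSpace X] {V : X → X} (hV : ContDiff ℝ 1 V)
    {φ : ℝ → X → X} (hφ0 : ∀ x, φ 0 x = x)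
    (hflow : ∀ x t, HasDerivAt (fun s => φ s x) (V (φ t x)) t) {𝒦 : Set X}
    (h𝒦 : IsCompact 𝒦) :
    ∃ L ≥ 0, ∀ η > 0, ∀ᶠ ε in 𝓝 (0 : ℝ), ∀ x ∈ 𝒦, ∀ x' ∈ 𝒦, ∀ t ∈ Icc 0 ε,
      ‖(φ t x' - φ t x) - (x' - x)‖ ≤ L * ‖x' - x‖ * t ∧
      ‖(φ t x' - φ t x) - (x' - x) - t • (V x' - V x)‖ ≤ η * ‖x' - x‖ * t := by
  obtain ⟨R, M, hM, hconfined⟩ :=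
    exists_flow_mem_closedBall_and_dist_le hV.continuous hφ0 hflow h𝒦
  have hB : IsCompact (closedBall (0 : X) R) := isCompact_closedBall _ _
  have hV' : Continuous (fderiv ℝ V) := hV.continuous_fderiv one_ne_zero
  obtain ⟨K, hK⟩ : ∃ K : ℝ≥0, ∀ z ∈ closedBall (0 : X) R, ‖fderiv ℝ V z‖ ≤ K := by
    obtain ⟨K, hK⟩ := hB.exists_bound_of_continuousOn hV'.continuousOn
    exact ⟨K.toNNReal, fun z hz => (hK z hz).trans (Real.le_coe_toNNReal K)⟩
  have hderiv : ∀ z, HasFDerivAt V (fderiv ℝ V z) z := fun z =>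
    (hV.differentiable one_ne_zero z).hasFDerivAt
  have hlip : LipschitzOnWith K V (closedBall 0 R) :=
    (convex_closedBall _ _).lipschitzOnWith_of_nnnorm_fderiv_le
      (fun z _ => (hderiv z).differentiableAt) (fun z hz => hK z hz)
  refine ⟨2 * K, by positivity, fun η hη => ?_⟩
  obtain ⟨δ, hδ, hunif⟩ := Metric.uniformContinuousOn_iff.1
    (hB.uniformContinuousOn_of_continuous hV'.continuousOn) (η / 2) (by positivity)
  have hlim : ∀ g : ℝ → ℝ, Continuous g → ∀ b, g 0 < b → ∀ᶠ ε in 𝓝 0, g ε < b :=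
    fun g hg b hb => (hg.tendsto 0).eventually_lt_const hb
  have hsmall : ∀ᶠ ε in 𝓝 (0 : ℝ), Real.exp (K * ε) < 2 ∧ 3 * M * ε < δ ∧
      K * (2 * K) * ε < η / 2 :=
    (hlim _ (by fun_prop) 2 (by norm_num)).and <|
      (hlim _ (by fun_prop) δ (by simpa using hδ)).and (hlim _ (by fun_prop) _ (by simpa using hη))
  filter_upwards [hconfined, hsmall] with ε hconfined ⟨hKε, hδε, hηε⟩ x hx x' hx' t ht
  have hfirst := norm_sub_sub_le_of_lipschitzOnWith (hflow x) (hflow x') hlip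
    (fun s hs => (hconfined x hx s hs).1) (fun s hs => (hconfined x' hx' s hs).1) hKε.le
  have hsecond := norm_sub_sub_sub_smul_le_of_uniform_fderiv (convex_closedBall _ _)
    (fun z _ => hderiv z) hK hunif (hflow x) (hflow x') (fun s hs => (hconfined x hx s hs).1)
    (fun s hs => (hconfined x' hx' s hs).1) hM
    (fun s hs => by simpa [hφ0] using (hconfined x hx s hs).2)
    (fun s hs => by simpa [hφ0] using (hconfined x' hx' s hs).2) (by positivity) hfirst hδε
    hηε.le
  simp only [hφ0] at hfirst hsecond
  exact ⟨hfirst t ht, hsecond t ht⟩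

end Trajectories

theorem twist_estimates_of_approx {F : Type*} [NormedAddCommGroup F] [InnerProductSpace ℝ F]
    {P Q D v : F} {t c C L : ℝ} (ht : 0 ≤ t) (hc : 0 ≤ c) (hcC : c ≤ C)
    (hD : ‖D‖ ≤ C * ‖v‖) (hDv : c * ‖v‖ ^ 2 ≤ ⟪D, v⟫) (hQ : ‖Q - t • D‖ ≤ c / 4 * ‖v‖ * t)
    (hP : ‖P - v‖ ≤ L * ‖v‖ * t) (hLt : 2 * L * C * t ≤ c / 4) :
    c / 2 * t * ‖v‖ ^ 2 ≤ ⟪P, Q⟫ ∧ ‖Q‖ ≤ 2 * C * t * ‖v‖ := by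
  have hQnorm : ‖Q‖ ≤ 2 * C * t * ‖v‖ :=
    calc ‖Q‖ = ‖t • D + (Q - t • D)‖ := by rw [add_sub_cancel]
      _ ≤ t * (C * ‖v‖) + c / 4 * ‖v‖ * t := by
          grw [norm_add_le, norm_smul, Real.norm_of_nonneg ht, hD, hQ]
      _ ≤ 2 * C * t * ‖v‖ := by nlinarith [mul_nonneg ht (norm_nonneg v)]
  refine ⟨?_, hQnorm⟩
  have hsplit : ⟪P, Q⟫ = t * ⟪D, v⟫ + ⟪v, Q - t • D⟫ + ⟪P - v, Q⟫ := by
    rw [inner_sub_left, inner_sub_right, real_inner_smul_right, real_inner_comm D]; ring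
  have hvQ : -(‖v‖ * (c / 4 * ‖v‖ * t)) ≤ ⟪v, Q - t • D⟫ :=
    (neg_le_neg (mul_le_mul_of_nonneg_left hQ (norm_nonneg v))).trans
      (neg_le_of_abs_le (abs_real_inner_le_norm _ _))
  have hPQ : -(L * ‖v‖ * t * (2 * C * t * ‖v‖)) ≤ ⟪P - v, Q⟫ :=
    (neg_le_neg (mul_le_mul hP hQnorm (norm_nonneg _) ((norm_nonneg _).trans hP))).trans
      (neg_le_of_abs_le (abs_real_inner_le_norm _ _))
  have hsmall : L * ‖v‖ * t * (2 * C * t * ‖v‖) ≤ c / 4 * t * ‖v‖ ^ 2 := by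
    have := mul_le_mul_of_nonneg_right hLt (mul_nonneg ht (sq_nonneg ‖v‖))
    nlinarith
  nlinarith [mul_le_mul_of_nonneg_left hDv ht]

/-- quantitative twist estimates for the Hamiltonian flow of a `C²` Hamiltonian
with fiberwise-convex compact `𝒦` and `c‖v‖² ≤ H_{pp}(φ_τ x)(v,v) ≤ C‖v‖²`. -/
theorem stmt10 {d : ℕ}
    (H : EuclideanSpace ℝ (Fin d) × EuclideanSpace ℝ (Fin d) → ℝ)
    (hH : ContDiff ℝ 2 H)
    (φ : ℝ → EuclideanSpace ℝ (Fin d) × EuclideanSpace ℝ (Fin d) →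
      EuclideanSpace ℝ (Fin d) × EuclideanSpace ℝ (Fin d))
    (hφ0 : ∀ x, φ 0 x = x)
    (hflow : ∀ x t, HasDerivAt (fun s => φ s x) (HamVF H (φ t x)) t)
    (𝒦 : Set (EuclideanSpace ℝ (Fin d) × EuclideanSpace ℝ (Fin d)))
    (h𝒦 : IsCompact 𝒦)
    (h𝒦conv : ∀ q p p', (q, p) ∈ 𝒦 → (q, p') ∈ 𝒦 →
      ∀ s ∈ Set.Icc (0 : ℝ) 1, (q, s • p + (1 - s) • p') ∈ 𝒦)
    (c C : ℝ) (hc : 0 < c) (hcC : c ≤ C)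
    (hHess : ∀ τ ∈ Set.Icc (-1 : ℝ) 1, ∀ x ∈ 𝒦, ∀ v,
      c * ‖v‖ ^ 2 ≤ Hpp H (φ τ x) v ∧ Hpp H (φ τ x) v ≤ C * ‖v‖ ^ 2) :
    ∃ ε > 0, ∀ t ∈ Set.Ioc (0 : ℝ) ε, ∀ q p Δp : EuclideanSpace ℝ (Fin d),
      (q, p) ∈ 𝒦 → (q, p + Δp) ∈ 𝒦 →
      (c / 2) * t * ‖Δp‖ ^ 2 ≤
          ⟪(φ t (q, p + Δp)).2 - (φ t (q, p)).2, (φ t (q, p + Δp)).1 - (φ t (q, p)).1⟫ ∧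
        ‖(φ t (q, p + Δp)).1 - (φ t (q, p)).1‖ ≤ 2 * C * t * ‖Δp‖ := by
  obtain ⟨L, hL, hflowest⟩ := exists_flow_sub_estimates (contDiff_hamVF hH) hφ0 hflow h𝒦
  have hsmall : ∀ᶠ ε in 𝓝 (0 : ℝ), 2 * L * C * ε < c / 4 :=
    ((continuous_const_mul _).tendsto 0).eventually_lt_const (by simpa using hc)
  obtain ⟨ε, ⟨hest, hε⟩, hε0⟩ := ((((hflowest (c / 4) (by positivity)).and hsmall).filter_mono
    nhdsWithin_le_nhds).and (self_mem_nhdsWithin (s := Ioi (0 : ℝ)))).exists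
  refine ⟨ε, hε0, fun t ht q p Δp hx hx' => ?_⟩
  have hseg : ∀ r ∈ Icc (0 : ℝ) 1, (q, p + r • Δp) ∈ 𝒦 := fun r hr => by
    convert h𝒦conv q (p + Δp) p hx' hx r hr using 2
    rw [smul_add, sub_smul, one_smul]; abel
  have hHpp : ∀ r ∈ Icc (0 : ℝ) 1, ∀ u, c * ‖u‖ ^ 2 ≤ Hpp H (q, p + r • Δp) u ∧
      Hpp H (q, p + r • Δp) u ≤ C * ‖u‖ ^ 2 := fun r hr u => by
    simpa only [hφ0] using hHess 0 (by norm_num) _ (hseg r hr) u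
  have hh : ContDiff ℝ 2 (fun p' => H (q, p')) := hH.comp (contDiff_const.prodMk contDiff_id)
  obtain ⟨hP, hQ⟩ := hest _ hx _ hx' t ⟨ht.1.le, ht.2⟩
  have hC : 0 ≤ C := hc.le.trans hcC
  refine twist_estimates_of_approx (L := L) ht.1.le hc.le hcC
    (norm_gradient_sub_le hh hC fun r hr u => abs_le.2 ⟨?_, (hHpp r hr u).2⟩)
    (mul_norm_sq_le_inner_gradient_sub
      ((hh.fderiv_right (m := 1) (by norm_num)).differentiable one_ne_zero)
      fun r hr => (hHpp r hr Δp).1) ?_ ?_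
    ((mul_le_mul_of_nonneg_left ht.2 (by positivity)).trans hε.le)
  · exact (neg_nonpos.2 (mul_nonneg hC (sq_nonneg _))).trans
      ((mul_nonneg hc.le (sq_nonneg _)).trans (hHpp r hr u).1)
  · simpa [HamVF] using (norm_fst_le _).trans hQ
  · simpa using (norm_snd_le _).trans hP
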